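/- Let T : F → Id be an ambidextrous natural transformation on a category V. Define Z with the same objects as V and Hom_Z(M,N) = colim_p Hom_V(F^p(M), N), with connecting maps given by right multiplication with F^p(T^q_M), and composition induced as in the paper: [g]∘[f] for g : F^q(N) → O and f : F^p(M) → N is [g ∘ F^q(f)] in Hom_V(F^{p+q}(M), O). Then this composition is well-defined (compatible with the colimits) and associative and unital, so Z is a category. -/

import Mathlib

open CategoryTheory

namespace Stmt2

variable {V : Type*} [Category V]

/-- Iterates `F^p` of an endofunctor. -/
def Fpow (F : V ⥤ V) : ℕ → (V ⥤ V)
  | 0 => 𝟭 V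
  | n + 1 => F ⋙ Fpow F n

lemma Fpow_obj_add (F : V ⥤ V) (p q : ℕ) (M : V) :
    (Fpow F (p + q)).obj M = (Fpow F p).obj ((Fpow F q).obj M) := by
  induction q generalizing M with
  | zero => rfl
  | succ q ih => exact ih (F.obj M)

/-- Iterates `T^p : F^p ⟶ 𝟭`. -/
def Tpow (F : V ⥤ V) (T : F ⟶ 𝟭 V) : ∀ (p : ℕ) (M : V), (Fpow F p).obj M ⟶ M
  | 0, M => 𝟙 M
  | p + 1, M => Tpow F T p (F.obj M) ≫ T.app M

/-- The connecting map of the direct system: extend `f : F^p(M) ⟶ N` to `F^{p+r}(M) ⟶ N`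
by precomposing with `F^p(T^r_M)`. -/
def ext (F : V ⥤ V) (T : F ⟶ 𝟭 V) {M N : V} (p r : ℕ) (f : (Fpow F p).obj M ⟶ N) :
    (Fpow F (p + r)).obj M ⟶ N :=
  eqToHom (Fpow_obj_add F p r M) ≫ (Fpow F p).map (Tpow F T r M) ≫ f

/-- The relation generating the colimit `Hom_Z(M,N) = colim_p Hom_V(F^p(M), N)`. -/
def ZHomRel (F : V ⥤ V) (T : F ⟶ 𝟭 V) (M N : V) :
    (Σ p : ℕ, (Fpow F p).obj M ⟶ N) → (Σ p : ℕ, (Fpow F p).obj M ⟶ N) → Prop :=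
  fun x y => ∃ r : ℕ, y = ⟨x.1 + r, ext F T x.1 r x.2⟩

/-- `Hom_Z(M,N) = colim_p Hom_V(F^p(M), N)`, morphisms in the localization of `V` along `T`. -/
def ZHom (F : V ⥤ V) (T : F ⟶ 𝟭 V) (M N : V) : Type _ :=
  Quot (ZHomRel F T M N)

/-- Composition at the level of representatives: for `f : F^p(M) ⟶ N` and `g : F^q(N) ⟶ O`,
the composite is `g ∘ F^q(f) : F^{p+q}(M) ⟶ O`. -/
def zcomp (F : V ⥤ V) {M N O : V} {p q : ℕ}
    (f : (Fpow F p).obj M ⟶ N) (g : (Fpow F q).obj N ⟶ O) :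
    (Fpow F (p + q)).obj M ⟶ O :=
  eqToHom (by rw [Nat.add_comm]; exact Fpow_obj_add F q p M) ≫ (Fpow F q).map f ≫ g

section Aux

variable (F : V ⥤ V) (T : F ⟶ 𝟭 V)

lemma Fpow_map_add (p q : ℕ) {X Y : V} (f : X ⟶ Y) :
    (Fpow F (p + q)).map f =
      eqToHom (Fpow_obj_add F p q X) ≫ (Fpow F p).map ((Fpow F q).map f) ≫
        eqToHom (Fpow_obj_add F p q Y).symm := by
  induction q generalizing X Y with
  | zero => simp [Fpow]; exact (Category.id_comp _).symm
  | succ q ih => exact ih (F.map f)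

lemma Fpow_congr_map {p q : ℕ} (h : p = q) {X Y : V} (f : X ⟶ Y) :
    (Fpow F q).map f = eqToHom (by rw [h]) ≫ (Fpow F p).map f ≫ eqToHom (by rw [h]) := by
  subst h; simp

lemma Tpow_naturality (s : ℕ) {X Y : V} (f : X ⟶ Y) :
    (Fpow F s).map f ≫ Tpow F T s Y = Tpow F T s X ≫ f := by
  induction s generalizing X Y with
  | zero => simp [Fpow, Tpow]
  | succ s ih =>
      show (Fpow F s).map (F.map f) ≫ Tpow F T s (F.obj Y) ≫ T.app Y = _
      rw [← Category.assoc, ih (F.map f), Category.assoc, T.naturality]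
      simp [Tpow]
      exact (Category.assoc _ _ _).symm

lemma Fpow_obj_swap (s : ℕ) (M : V) :
    (Fpow F s).obj (F.obj M) = F.obj ((Fpow F s).obj M) := by
  induction s generalizing M with
  | zero => rfl
  | succ s ih => exact ih (F.obj M)

lemma Tpow_amb_one (amb : ∀ M : V, T.app (F.obj M) = F.map (T.app M)) (s : ℕ) (M : V) :
    Tpow F T s (F.obj M) = eqToHom (Fpow_obj_swap F s M) ≫ F.map (Tpow F T s M) := by
  induction s generalizing M with
  | zero => show 𝟙 _ = _ ≫ F.map (𝟙 M); simp; exact (Category.id_comp _).symm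
  | succ s ih =>
      show Tpow F T s (F.obj (F.obj M)) ≫ T.app (F.obj M) = _
      rw [ih (F.obj M), amb M, Category.assoc, ← Functor.map_comp]
      rfl

lemma Fpow_obj_swap' (s p : ℕ) (M : V) :
    (Fpow F s).obj ((Fpow F p).obj M) = (Fpow F p).obj ((Fpow F s).obj M) := by
  refine (Fpow_obj_add F s p M).symm.trans ?_
  rw [Nat.add_comm]
  exact Fpow_obj_add F p s M

lemma Tpow_amb_pow (amb : ∀ M : V, T.app (F.obj M) = F.map (T.app M)) (s p : ℕ) (M : V) :
    Tpow F T s ((Fpow F p).obj M) =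
      eqToHom (Fpow_obj_swap' F s p M) ≫ (Fpow F p).map (Tpow F T s M) := by
  induction p generalizing M with
  | zero => simp [Fpow]; exact (Category.id_comp _).symm
  | succ p ih =>
      show Tpow F T s ((Fpow F p).obj (F.obj M)) = _
      rw [ih (F.obj M), Tpow_amb_one F T amb s M, Functor.map_comp, eqToHom_map]
      show _ = eqToHom _ ≫ (Fpow F p).map (F.map (Tpow F T s M))
      rw [← Category.assoc, eqToHom_trans]

lemma mk_ext {M N : V} (p r : ℕ) (f : (Fpow F p).obj M ⟶ N) :
    Quot.mk (ZHomRel F T M N) ⟨p + r, ext F T p r f⟩ = Quot.mk _ ⟨p, f⟩ :=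
  (Quot.sound ⟨r, rfl⟩).symm

lemma mk_cast {M N : V} {p p' : ℕ} (h : p = p') (f : (Fpow F p).obj M ⟶ N) :
    Quot.mk (ZHomRel F T M N) ⟨p', eqToHom (by rw [h]) ≫ f⟩ = Quot.mk _ ⟨p, f⟩ := by
  subst h; simp

lemma zcomp_ext_left {M N O : V} {p q : ℕ} (r : ℕ)
    (f : (Fpow F p).obj M ⟶ N) (g : (Fpow F q).obj N ⟶ O) :
    zcomp F (ext F T p r f) g =
      eqToHom (by rw [Nat.add_right_comm]) ≫ ext F T (p + q) r (zcomp F f g) := by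
  simp only [zcomp, ext, Functor.map_comp, eqToHom_map, Category.assoc, eqToHom_trans_assoc]
  rw [Fpow_congr_map F (Nat.add_comm q p) (Tpow F T r M), Fpow_map_add F q p (Tpow F T r M)]
  simp only [Category.assoc, eqToHom_trans_assoc, eqToHom_trans, eqToHom_refl, Category.id_comp]

lemma zcomp_ext_right {M N O : V} {p q : ℕ}
    (amb : ∀ M : V, T.app (F.obj M) = F.map (T.app M)) (s : ℕ)
    (f : (Fpow F p).obj M ⟶ N) (g : (Fpow F q).obj N ⟶ O) :
    zcomp F f (ext F T q s g) =
      eqToHom (by rw [Nat.add_assoc]) ≫ ext F T (p + q) s (zcomp F f g) := by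
  simp only [zcomp, ext, Functor.map_comp, eqToHom_map, Category.assoc, eqToHom_trans_assoc]
  rw [Fpow_map_add F q s f]
  rw [Fpow_congr_map F (Nat.add_comm q p) (Tpow F T s M), Fpow_map_add F q p (Tpow F T s M)]
  simp only [Category.assoc, eqToHom_trans_assoc, eqToHom_trans, eqToHom_refl, Category.id_comp]
  rw [← Category.assoc ((Fpow F q).map ((Fpow F s).map f)), ← Functor.map_comp,
    Tpow_naturality F T s f, Tpow_amb_pow F T amb s p M]
  simp only [Functor.map_comp, eqToHom_map, Category.assoc, eqToHom_trans_assoc]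

lemma zcomp_assoc {M N O P : V} {p q r : ℕ}
    (f : (Fpow F p).obj M ⟶ N) (g : (Fpow F q).obj N ⟶ O) (h : (Fpow F r).obj O ⟶ P) :
    zcomp F (zcomp F f g) h =
      eqToHom (by rw [Nat.add_assoc]) ≫ zcomp F f (zcomp F g h) := by
  simp only [zcomp, Functor.map_comp, eqToHom_map, Category.assoc, eqToHom_trans_assoc]
  rw [Fpow_congr_map F (Nat.add_comm r q) f, Fpow_map_add F r q f]
  simp only [Category.assoc, eqToHom_trans_assoc, eqToHom_trans, eqToHom_refl, Category.id_comp]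

/-- Composition on `ZHom`, well-defined on the quotients. -/
def zmul (amb : ∀ M : V, T.app (F.obj M) = F.map (T.app M)) (M N O : V)
    (x : ZHom F T M N) (y : ZHom F T N O) : ZHom F T M O :=
  Quot.lift
    (fun a : Σ p : ℕ, (Fpow F p).obj M ⟶ N =>
      Quot.lift
        (fun b : Σ q : ℕ, (Fpow F q).obj N ⟶ O =>
          Quot.mk (ZHomRel F T M O) ⟨a.1 + b.1, zcomp F a.2 b.2⟩)
        (by
          rintro ⟨q, g⟩ b' ⟨s, rfl⟩
          show Quot.mk (ZHomRel F T M O) ⟨a.1 + q, zcomp F a.2 g⟩ =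
            Quot.mk (ZHomRel F T M O) ⟨a.1 + (q + s), zcomp F a.2 (ext F T q s g)⟩
          rw [zcomp_ext_right F T amb s a.2 g, mk_cast F T (Nat.add_assoc a.1 q s),
            mk_ext]) y)
    (by
      rintro ⟨p, f⟩ a' ⟨r, rfl⟩
      induction y using Quot.ind with
      | _ b =>
        obtain ⟨q, g⟩ := b
        show Quot.mk (ZHomRel F T M O) ⟨p + q, zcomp F f g⟩ =
          Quot.mk (ZHomRel F T M O) ⟨p + r + q, zcomp F (ext F T p r f) g⟩
        rw [zcomp_ext_left F T r f g, mk_cast F T (Nat.add_right_comm p q r), mk_ext]) x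

end Aux

/-- if `T` is ambidextrous, the composition of representatives descends to a
well-defined composition on the colimits `ZHom`, which is moreover unital and associative;
hence `Z` (same objects as `V`, morphisms `ZHom`) is a category. -/
theorem Z_is_category (F : V ⥤ V) (T : F ⟶ 𝟭 V)
    (amb : ∀ M : V, T.app (F.obj M) = F.map (T.app M)) :
    ∃ comp : ∀ M N O : V, ZHom F T M N → ZHom F T N O → ZHom F T M O,
      (∀ (M N O : V) (p q : ℕ) (f : (Fpow F p).obj M ⟶ N) (g : (Fpow F q).obj N ⟶ O),
          comp M N O (Quot.mk _ ⟨p, f⟩) (Quot.mk _ ⟨q, g⟩) = Quot.mk _ ⟨p + q, zcomp F f g⟩) ∧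
      (∀ (M N : V) (x : ZHom F T M N), comp M M N (Quot.mk _ ⟨0, 𝟙 M⟩) x = x) ∧
      (∀ (M N : V) (x : ZHom F T M N), comp M N N x (Quot.mk _ ⟨0, 𝟙 N⟩) = x) ∧
      (∀ (M N O P : V) (x : ZHom F T M N) (y : ZHom F T N O) (z : ZHom F T O P),
          comp M O P (comp M N O x y) z = comp M N P x (comp N O P y z)) := by
  refine ⟨zmul F T amb, fun M N O p q f g => rfl, ?_, ?_, ?_⟩
  · intro M N x
    induction x using Quot.ind with
    | _ b =>
      obtain ⟨q, g⟩ := b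
      show Quot.mk (ZHomRel F T M N) ⟨0 + q, zcomp F (𝟙 M) g⟩ = Quot.mk (ZHomRel F T M N) ⟨q, g⟩
      have hz : zcomp F (𝟙 M) g = eqToHom (by rw [Nat.zero_add]) ≫ g := by
        simp [zcomp, Fpow]
      rw [hz, mk_cast F T (Nat.zero_add q).symm g]
  · intro M N x
    induction x using Quot.ind with
    | _ a =>
      obtain ⟨p, f⟩ := a
      show Quot.mk (ZHomRel F T M N) ⟨p + 0, zcomp F f (𝟙 N)⟩ = Quot.mk (ZHomRel F T M N) ⟨p, f⟩
      have hz : zcomp F f (𝟙 N) = eqToHom (by rw [Nat.add_zero]) ≫ f := by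
        simp [zcomp, Fpow]
        exact Category.id_comp _
      rw [hz, mk_cast F T (Nat.add_zero p).symm f]
  · intro M N O P x y z
    induction x using Quot.ind with
    | _ a =>
      induction y using Quot.ind with
      | _ b =>
        induction z using Quot.ind with
        | _ c =>
          obtain ⟨p, f⟩ := a; obtain ⟨q, g⟩ := b; obtain ⟨r, h⟩ := c
          show Quot.mk (ZHomRel F T M P) ⟨p + q + r, zcomp F (zcomp F f g) h⟩ =
            Quot.mk (ZHomRel F T M P) ⟨p + (q + r), zcomp F f (zcomp F g h)⟩
          rw [zcomp_assoc F f g h, mk_cast F T (Nat.add_assoc p q r).symm]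


end Stmt2
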